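/- The function t ↦ (t + 5t⁻³ − 6t⁻⁵)/(√(t² − 1)·(t^(−2/3) + 6t⁻⁴ + t⁻²)) is strictly increasing on (1, ∞). -/

import Mathlib

open Real Set

/-! With `s = t ^ (1/3)` and `t + 5 t⁻³ - 6 t⁻⁵ = (t² - 1)(t⁴ + t² + 6) / t⁵`, the function factors as
`√(t² - 1) / t · (s¹² + s⁶ + 6) / (s¹⁰ + s⁶ + 6)`. Both factors are positive and increasing:
the first is `√(1 - t⁻²)`, the second is `1 + (s² - 1) / (1 + s⁻⁴ + 6 s⁻¹⁰)`. -/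

theorem StrictMonoOn.mul {α M₀ : Type*} [Preorder α] [MulZeroClass M₀] [Preorder M₀]
    [PosMulStrictMono M₀] [MulPosMono M₀] {f g : α → M₀} {s : Set α}
    (hf : StrictMonoOn f s) (hg : StrictMonoOn g s) (hf₀ : ∀ x ∈ s, 0 ≤ f x)
    (hg₀ : ∀ x ∈ s, 0 ≤ g x) : StrictMonoOn (fun x ↦ f x * g x) s :=
  fun x hx _ hy h ↦ mul_lt_mul'' (hf hx hy h) (hg hx hy h) (hf₀ x hx) (hg₀ x hx)

lemma strictMonoOn_sqrt_sq_sub_one_div :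
    StrictMonoOn (fun t : ℝ ↦ √(t ^ 2 - 1) / t) (Ioi 1) := by
  have key : ∀ t : ℝ, 0 < t → √(t ^ 2 - 1) / t = √(1 - (t ^ 2)⁻¹) := fun t ht ↦ by
    rw [← sqrt_sq ht.le, ← sqrt_div' _ (sq_nonneg t), sqrt_sq ht.le, sub_div,
      div_self (by positivity), one_div]
  intro x (hx : 1 < x) y (hy : 1 < y) hxy
  simp only
  rw [key x (by positivity), key y (by positivity)]
  gcongr
  exact sub_nonneg.2 (inv_le_one_of_one_le₀ (one_le_pow₀ hx.le))

lemma strictMonoOn_ratio_twelve_ten :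
    StrictMonoOn (fun s : ℝ ↦ (s ^ 12 + s ^ 6 + 6) / (s ^ 10 + s ^ 6 + 6)) (Ioi 1) := by
  -- in the second form the numerator increases and the denominator decreases with `s`
  have key : ∀ s : ℝ, 0 < s → (s ^ 12 + s ^ 6 + 6) / (s ^ 10 + s ^ 6 + 6) =
      1 + (s ^ 2 - 1) / (1 + (s ^ 4)⁻¹ + 6 * (s ^ 10)⁻¹) :=
    fun s hs ↦ by field_simp; ring
  intro a (ha : 1 < a) b (hb : 1 < b) hab
  simp only
  rw [key a (by positivity), key b (by positivity)]
  gcongr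
  nlinarith

lemma rpow_neg_two_div_three {t : ℝ} (ht : 0 ≤ t) :
    t ^ (-(2 : ℝ) / 3) = ((t ^ (3⁻¹ : ℝ)) ^ 2)⁻¹ := by
  rw [neg_div, rpow_neg ht, ← rpow_natCast, ← rpow_mul ht]
  norm_num

lemma div_eq_sqrt_mul_ratio_of_cube {s : ℝ} (hs : 1 < s) :
    (s ^ 3 + 5 * ((s ^ 3) ^ 3)⁻¹ - 6 * ((s ^ 3) ^ 5)⁻¹) /
        (√((s ^ 3) ^ 2 - 1) * ((s ^ 2)⁻¹ + 6 * ((s ^ 3) ^ 4)⁻¹ + ((s ^ 3) ^ 2)⁻¹)) =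
      √((s ^ 3) ^ 2 - 1) / s ^ 3 * ((s ^ 12 + s ^ 6 + 6) / (s ^ 10 + s ^ 6 + 6)) := by
  have hs₃ : 1 < s ^ 3 := one_lt_pow₀ hs (by norm_num)
  have hw : 0 < √((s ^ 3) ^ 2 - 1) := sqrt_pos.2 (by nlinarith)
  have hw2 : √((s ^ 3) ^ 2 - 1) ^ 2 = (s ^ 3) ^ 2 - 1 := sq_sqrt (by nlinarith)
  generalize √((s ^ 3) ^ 2 - 1) = w at hw hw2 ⊢
  field_simp
  rw [hw2]
  ring

theorem stmt_12 :
    StrictMonoOn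
      (fun t : ℝ => (t + 5 * (t ^ 3)⁻¹ - 6 * (t ^ 5)⁻¹) /
        (Real.sqrt (t ^ 2 - 1) * (t ^ (-(2 : ℝ) / 3) + 6 * (t ^ 4)⁻¹ + (t ^ 2)⁻¹)))
      (Set.Ioi (1 : ℝ)) := by
  have hcbrt : StrictMonoOn (fun t : ℝ ↦ t ^ (3⁻¹ : ℝ)) (Ioi 1) :=
    (strictMonoOn_rpow_Ici_of_exponent_pos (by norm_num)).mono (Ioi_subset_Ici zero_le_one)
  have hcbrt_maps : MapsTo (fun t : ℝ ↦ t ^ (3⁻¹ : ℝ)) (Ioi 1) (Ioi 1) :=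
    fun t ht ↦ one_lt_rpow ht (by norm_num)
  refine (strictMonoOn_sqrt_sq_sub_one_div.mul
    (strictMonoOn_ratio_twelve_ten.comp hcbrt hcbrt_maps) ?_ ?_).congr ?_
  · intro t (ht : 1 < t)
    positivity
  · intro t (ht : 1 < t)
    simp only [Function.comp_apply]
    positivity
  · intro t (ht : 1 < t)
    have hcube : (t ^ (3⁻¹ : ℝ)) ^ 3 = t := by
      simpa using rpow_inv_natCast_pow (n := 3) (by positivity : 0 ≤ t) (by norm_num)
    have hs : 1 < t ^ (3⁻¹ : ℝ) := hcbrt_maps ht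
    simp only [Function.comp_apply]
    rw [rpow_neg_two_div_three (by positivity)]
    generalize t ^ (3⁻¹ : ℝ) = s at hcube hs ⊢
    subst hcube
    exact (div_eq_sqrt_mul_ratio_of_cube hs).symm
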